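/- In a commutative idempotent involutive residuated lattice, for a negative element a (a ≤ 1) and all x, y with x ≤ 1_a and y ≤ 1_a (where 1_a := a ∨ ¬a), one has (x·y) ∨ a = (x ∨ a)·(y ∨ a). -/

import Mathlib

/-- A commutative idempotent involutive residuated lattice. -/
class CIdInRL (α : Type*) extends Lattice α, CommMonoid α, Zero α where
  arrow : α → α → α
  residuation : ∀ x y z : α, x * y ≤ z ↔ y ≤ arrow x z
  idem : ∀ x : α, x * x = x
  involutive : ∀ x : α, arrow (arrow x 0) 0 = x

namespace CIdInRL
variable {α : Type*} [CIdInRL α]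
/-- linear negation ¬x := x → 0 -/
def neg (x : α) : α := arrow x 0
/-- 0_x := x ∧ ¬x -/
def zx (x : α) : α := x ⊓ neg x
/-- 1_x := x ∨ ¬x -/
def ox (x : α) : α := x ⊔ neg x
/-- monoidal order x ⊑ y iff x·y = x -/
def mleq (x y : α) : Prop := x * y = x
end CIdInRL

/-! Multiplication distributes over joins, so `(x ∨ a)(y ∨ a) = xy ∨ ay ∨ xa ∨ a`. The middle
terms are absorbed by `a`, because `a · 1_a = a`: idempotence gives `a¬a · ¬a = a¬a ≤ 0`,
hence `a¬a ≤ ¬¬a = a`. -/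

namespace CIdInRL

variable {α : Type*} [CIdInRL α]

instance : MulLeftMono α where
  elim x y z h :=
    (residuation x y (x * z)).mpr (h.trans ((residuation x z (x * z)).mp le_rfl))

protected theorem mul_sup (x y z : α) : x * (y ⊔ z) = x * y ⊔ x * z := by
  refine le_antisymm ?_ <|
    sup_le (mul_le_mul_right le_sup_left x) (mul_le_mul_right le_sup_right x)
  rw [residuation]
  exact sup_le ((residuation _ _ _).mp le_sup_left) ((residuation _ _ _).mp le_sup_right)

protected theorem sup_mul (x y z : α) : (x ⊔ y) * z = x * z ⊔ y * z := by
  rw [mul_comm, CIdInRL.mul_sup, mul_comm z, mul_comm z]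

theorem neg_neg (x : α) : neg (neg x) = x :=
  involutive x

theorem mul_neg_le_zero (x : α) : x * neg x ≤ 0 :=
  (residuation x (neg x) 0).mpr le_rfl

theorem mul_neg_le_self (x : α) : x * neg x ≤ x := by
  conv_rhs => rw [← neg_neg x]
  refine (residuation (neg x) _ 0).mp ?_
  rw [mul_left_comm, idem]
  exact mul_neg_le_zero x

theorem mul_ox_self (x : α) : x * ox x = x := by
  rw [ox, CIdInRL.mul_sup, idem]
  exact sup_eq_left.mpr (mul_neg_le_self x)

theorem mul_le_self_of_le_ox {a x : α} (hx : x ≤ ox a) : a * x ≤ a :=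
  (mul_le_mul_right hx a).trans_eq (mul_ox_self a)

theorem sup_mul_sup_self (x y a : α) :
    (x ⊔ a) * (y ⊔ a) = x * y ⊔ (a * y ⊔ x * a) ⊔ a := by
  rw [CIdInRL.sup_mul, CIdInRL.mul_sup, CIdInRL.mul_sup, idem]
  ac_rfl

end CIdInRL

open CIdInRL in
theorem stmt15_general {α : Type*} [CIdInRL α] (a x y : α)
    (hx : x ≤ ox a) (hy : y ≤ ox a) :
    (x * y) ⊔ a = (x ⊔ a) * (y ⊔ a) := by
  have hay : a * y ≤ a := mul_le_self_of_le_ox hy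
  have hxa : x * a ≤ a := mul_comm a x ▸ mul_le_self_of_le_ox hx
  rw [sup_mul_sup_self, sup_assoc, sup_eq_right.mpr (sup_le hay hxa)]

open CIdInRL in
theorem stmt15 {α : Type*} [CIdInRL α] (a x y : α) (ha : a ≤ 1)
    (hx : x ≤ ox a) (hy : y ≤ ox a) :
    (x * y) ⊔ a = (x ⊔ a) * (y ⊔ a) :=
  stmt15_general a x y hx hy
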